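/- Let U be a partial multifunction on ℕ. If U is computably transparent, then the operation j_U is monotone; if U is inflationary, then j_U is inflationary; if U is idempotent, then j_U is idempotent. In particular, if U is computably transparent, inflationary, and idempotent, then j_U is a Lawvere–Tierney topology. -/

import Mathlib

namespace KleeneOracle

/-- `e ∗ x`: application of the `e`-th partial computable function on ℕ. -/
def ap (e x : ℕ) : Part ℕ :=
  Nat.Partrec.Code.eval (Denumerable.ofNat Nat.Partrec.Code e) x

/-- `e ∗ A := {e ∗ a : a ∈ A}`. -/
def apSet (e : ℕ) (A : Set ℕ) : Set ℕ := {z | ∃ a ∈ A, z ∈ ap e a}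

/-- A partial multifunction on ℕ. -/
abbrev Multifun := ℕ → Part (Set ℕ)

def Transparent (U : Multifun) : Prop :=
  ∃ u : ℕ, ∀ (e x : ℕ) (A : Set ℕ), A ∈ U x → (∀ y ∈ A, (ap e y).Dom) →
    ∃ c ∈ ap u e, ∃ d ∈ ap c x, ∃ B ∈ U d, B ⊆ apSet e A

def Inflationary (U : Multifun) : Prop :=
  ∃ η : ℕ, ∀ x : ℕ, ∃ c ∈ ap η x, ∃ B ∈ U c, B ⊆ {x}

def mcomp (g f : Multifun) : Multifun := fun x =>
  ⟨∃ A ∈ f x, ∀ y ∈ A, (g y).Dom,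
   fun _ => {z | ∃ A ∈ f x, ∃ y ∈ A, ∃ B ∈ g y, z ∈ B}⟩

def Idempotent (U : Multifun) : Prop :=
  ∃ μ : ℕ, ∀ (x : ℕ) (A : Set ℕ), A ∈ mcomp U U x →
    ∃ c ∈ ap μ x, ∃ B ∈ U c, B ⊆ A

def mRed (f g : Multifun) : Prop :=
  ∃ e : ℕ, ∀ (x : ℕ) (A : Set ℕ), A ∈ f x →
    ∃ c ∈ ap e x, ∃ B ∈ g c, B ⊆ A

def wRed (f g : Multifun) : Prop :=
  ∃ em ep : ℕ, ∀ (x : ℕ) (A : Set ℕ), A ∈ f x →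
    ∃ c ∈ ap em x, ∃ B ∈ g c, ∀ y ∈ B, ∃ z ∈ ap ep (Nat.pair x y), z ∈ A

def Weih (g : Multifun) : Multifun := fun w =>
  ⟨∃ c ∈ ap w.unpair.1 w.unpair.2.unpair.2, ∃ B ∈ g c,
     ∀ y ∈ B, (ap w.unpair.2.unpair.1 (Nat.pair w.unpair.2.unpair.2 y)).Dom,
   fun _ => {z | ∃ c ∈ ap w.unpair.1 w.unpair.2.unpair.2, ∃ B ∈ g c,
     ∃ y ∈ B, z ∈ ap w.unpair.2.unpair.1 (Nat.pair w.unpair.2.unpair.2 y)}⟩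

def idsq (g : Multifun) : Multifun := fun w =>
  if w.unpair.1 = 0 then Part.some {w.unpair.2}
  else if w.unpair.1 = 1 then g w.unpair.2
  else Part.none

def pWeih (g : Multifun) : Multifun := Weih (idsq g)

def pwRed (f g : Multifun) : Prop := wRed f (idsq g)

def Med (Q : Set ℕ) : Multifun := fun e =>
  ⟨∀ a ∈ Q, (ap e a).Dom, fun _ => apSet e Q⟩

def MedRed (P Q : Set ℕ) : Prop :=
  ∃ e : ℕ, (∀ a ∈ Q, (ap e a).Dom) ∧ apSet e Q ⊆ P

def constMF (P : Set ℕ) : Multifun := fun _ => Part.some P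

def imp (p q : Set ℕ) : Set ℕ := {e | ∀ x ∈ p, ∃ z ∈ ap e x, z ∈ q}

def OpMonotone (j : Set ℕ → Set ℕ) : Prop :=
  ∃ u : ℕ, ∀ p q : Set ℕ, ∀ a ∈ imp p q, ∃ c ∈ ap u a, c ∈ imp (j p) (j q)

def OpInflationary (j : Set ℕ → Set ℕ) : Prop :=
  ∃ e : ℕ, ∀ p : Set ℕ, e ∈ imp p (j p)

def OpIdempotent (j : Set ℕ → Set ℕ) : Prop :=
  ∃ e : ℕ, ∀ p : Set ℕ, e ∈ imp (j (j p)) (j p)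

def LawvereTierney (j : Set ℕ → Set ℕ) : Prop :=
  OpMonotone j ∧ OpInflationary j ∧ OpIdempotent j

def jU (U : Multifun) (p : Set ℕ) : Set ℕ := {x | ∃ A ∈ U x, A ⊆ p}

def SingleValued (U : Multifun) : Prop := ∀ x : ℕ, ∀ A ∈ U x, ∃ y : ℕ, A = {y}

def presInter (j : Set ℕ → Set ℕ) : Prop :=
  ∀ (ι : Type) [Nonempty ι] (p : ι → Set ℕ), j (⋂ i, p i) = ⋂ i, j (p i)

def presUnion (j : Set ℕ → Set ℕ) : Prop :=
  ∀ (ι : Type) (p : ι → Set ℕ), j (⋃ i, p i) = ⋃ i, j (p i)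

def Uop (j : Set ℕ → Set ℕ) : Multifun := fun x =>
  ⟨∃ p : Set ℕ, x ∈ j p, fun _ => ⋂₀ {p : Set ℕ | x ∈ j p}⟩

def mMorphism (e : ℕ) (f g : Multifun) : Prop :=
  ∀ (x : ℕ) (A : Set ℕ), A ∈ f x → ∃ c ∈ ap e x, ∃ B ∈ g c, B ⊆ A

def rMorphism (e : ℕ) (j k : Set ℕ → Set ℕ) : Prop :=
  ∀ p : Set ℕ, e ∈ imp (j p) (k p)

def rRed (j k : Set ℕ → Set ℕ) : Prop := ∃ e : ℕ, rMorphism e j k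

open Nat.Partrec (Code)

/-! The realizer of each property of `U` realizes the corresponding property of `j_U`, except for
monotonicity: the transparency realizer `u` need only be defined at the `e` that are total on some
`U x`, so the realizer of monotonicity is an s-m-n index of `a ↦ λx. (u ∗ a) ∗ x`, which is total. -/

theorem ap_partrec₂ : Partrec₂ ap :=
  Code.eval_part.comp ((Computable.ofNat Code).comp Computable.fst) Computable.snd

theorem exists_index_of_partrec {f : ℕ →. ℕ} (hf : Partrec f) : ∃ e, ∀ x, ap e x = f x := by
  obtain ⟨c, hc⟩ := Code.exists_code.1 (Partrec.nat_iff.1 hf)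
  exact ⟨Encodable.encode c, fun x => by simp [ap, hc]⟩

theorem exists_index_smn {f : ℕ → ℕ →. ℕ} (hf : Partrec₂ f) :
    ∃ s, ∀ a, ∃ c ∈ ap s a, ∀ x, ap c x = f a x := by
  obtain ⟨e, he⟩ := exists_index_of_partrec (Partrec₂.unpaired.2 hf)
  have hcurry : Computable fun a => Encodable.encode ((Denumerable.ofNat Code e).curry a) :=
    (Primrec.encode.comp (Code.primrec₂_curry.comp (Primrec.const _) Primrec.id)).to_comp
  obtain ⟨s, hs⟩ := exists_index_of_partrec hcurry
  refine ⟨s, fun a => ⟨_, by rw [hs]; exact Part.mem_some _, fun x => ?_⟩⟩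
  simpa [ap, Code.eval_curry] using he (Nat.pair a x)

theorem exists_index_eta_expand (u : ℕ) :
    ∃ s, ∀ a, ∃ c ∈ ap s a, ∀ x, ap c x = (ap u a).bind fun c₀ => ap c₀ x :=
  exists_index_smn <| (ap_partrec₂.comp (Computable.const u) Computable.fst).bind
    (ap_partrec₂.comp Computable.snd (Computable.snd.comp Computable.fst))

theorem dom_ap_of_mem_imp {a : ℕ} {p q : Set ℕ} (ha : a ∈ imp p q) {y : ℕ} (hy : y ∈ p) :
    (ap a y).Dom :=
  let ⟨_, hz, _⟩ := ha y hy; Part.dom_iff_mem.2 ⟨_, hz⟩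

theorem apSet_subset_of_mem_imp {a : ℕ} {p q A : Set ℕ} (ha : a ∈ imp p q) (hA : A ⊆ p) :
    apSet a A ⊆ q := by
  rintro z ⟨y, hy, hz⟩
  obtain ⟨z', hz', hz'q⟩ := ha y (hA hy)
  rwa [Part.mem_unique hz hz']

theorem imp_subset_imp_left {p p' q : Set ℕ} (h : p' ⊆ p) : imp p q ⊆ imp p' q :=
  fun _ ha x hx => ha x (h hx)

theorem mMorphism.mem_imp_jU {e : ℕ} {f g : Multifun} (h : mMorphism e f g) (p : Set ℕ) :
    e ∈ imp (jU f p) (jU g p) := by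
  rintro x ⟨A, hA, hAp⟩
  obtain ⟨c, hc, B, hB, hBA⟩ := h x A hA
  exact ⟨c, hc, B, hB, hBA.trans hAp⟩

theorem jU_jU_subset_jU_mcomp (U : Multifun) (p : Set ℕ) :
    jU U (jU U p) ⊆ jU (mcomp U U) p := by
  rintro x ⟨A, hAx, hAp⟩
  choose B hB hBp using hAp
  have hdom : (mcomp U U x).Dom := ⟨A, hAx, fun y hy => Part.dom_iff_mem.2 ⟨_, hB hy⟩⟩
  refine ⟨_, Part.get_mem hdom, ?_⟩
  rintro z ⟨A', hA'x, y, hy, B', hB', hz⟩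
  rw [Part.mem_unique hA'x hAx] at hy
  exact hBp hy (Part.mem_unique hB' (hB hy) ▸ hz)

theorem Transparent.opMonotone_jU {U : Multifun} (h : Transparent U) : OpMonotone (jU U) := by
  obtain ⟨u, hu⟩ := h
  obtain ⟨s, hs⟩ := exists_index_eta_expand u
  refine ⟨s, fun p q a ha => ?_⟩
  obtain ⟨c, hc, hcx⟩ := hs a
  refine ⟨c, hc, ?_⟩
  rintro x ⟨A, hAx, hAp⟩
  obtain ⟨c₀, hc₀, d, hd, B, hB, hBA⟩ :=
    hu a x A hAx fun y hy => dom_ap_of_mem_imp ha (hAp hy)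
  exact ⟨d, hcx x ▸ Part.mem_bind hc₀ hd, B, hB, hBA.trans (apSet_subset_of_mem_imp ha hAp)⟩

theorem Inflationary.opInflationary_jU {U : Multifun} (h : Inflationary U) :
    OpInflationary (jU U) := by
  obtain ⟨η, hη⟩ := h
  refine ⟨η, fun p x hx => ?_⟩
  obtain ⟨c, hc, B, hB, hBx⟩ := hη x
  exact ⟨c, hc, B, hB, hBx.trans (Set.singleton_subset_iff.2 hx)⟩

theorem Idempotent.opIdempotent_jU {U : Multifun} (h : Idempotent U) : OpIdempotent (jU U) :=
  let ⟨μ, hμ⟩ := h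
  ⟨μ, fun p => imp_subset_imp_left (jU_jU_subset_jU_mcomp U p) (mMorphism.mem_imp_jU hμ p)⟩

/-- If `U` is computably transparent then `j_U` is monotone; if `U` is
inflationary then so is `j_U`; if `U` is idempotent then so is `j_U`.  In particular,
if `U` is computably transparent, inflationary and idempotent, then `j_U` is a
Lawvere–Tierney topology. -/
theorem transparent_to_modality (U : Multifun) :
    (Transparent U → OpMonotone (jU U)) ∧
    (Inflationary U → OpInflationary (jU U)) ∧
    (Idempotent U → OpIdempotent (jU U)) ∧
    (Transparent U → Inflationary U → Idempotent U → LawvereTierney (jU U)) :=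
  ⟨Transparent.opMonotone_jU, Inflationary.opInflationary_jU, Idempotent.opIdempotent_jU,
    fun ht hi hid => ⟨ht.opMonotone_jU, hi.opInflationary_jU, hid.opIdempotent_jU⟩⟩

end KleeneOracle
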